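/- arXiv:1206.3539 — 3 statements merged into one kernel-verified Lean document; each statement's English description precedes it below -/
import Mathlib

section
/- Let X be a non-trivial closed subspace of a Banach space Y such that X is a super-ideal in Y. If Y has the Daugavet property, then X has the Daugavet property. -/
universe u v

open Metric Set

section Defs

variable {Y : Type*} [NormedAddCommGroup Y] [NormedSpace ℝ Y]

/-- `X` is an ideal in `Y`. -/
def IsIdeal (X : Subspace ℝ Y) : Prop :=
  ∀ ε : ℝ, 0 < ε → ∀ E : Subspace ℝ Y, FiniteDimensional ℝ E →
    ∃ T : E →ₗ[ℝ] X,
      (∀ e : E, (e : Y) ∈ X → ((T e : X) : Y) = (e : Y)) ∧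
      (∀ e : E, ‖T e‖ ≤ (1 + ε) * ‖e‖)

/-- `X` is a super-ideal in `Y`. -/
def IsSuperIdeal (X : Subspace ℝ Y) : Prop :=
  ∀ ε : ℝ, 0 < ε → ∀ E : Subspace ℝ Y, FiniteDimensional ℝ E →
    ∃ T : E →ₗ[ℝ] X,
      (∀ e : E, (e : Y) ∈ X → ((T e : X) : Y) = (e : Y)) ∧
      (∀ e : E, (1 + ε)⁻¹ * ‖e‖ ≤ ‖T e‖ ∧ ‖T e‖ ≤ (1 + ε) * ‖e‖)

/-- `X` is a super u-ideal in `Y`. -/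
def IsSuperUIdeal (X : Subspace ℝ Y) : Prop :=
  ∀ ε : ℝ, 0 < ε → ∀ E : Subspace ℝ Y, FiniteDimensional ℝ E →
    ∃ T : E →ₗ[ℝ] X,
      (∀ e : E, (e : Y) ∈ X → ((T e : X) : Y) = (e : Y)) ∧
      (∀ e : E, (1 + ε)⁻¹ * ‖e‖ ≤ ‖T e‖ ∧ ‖T e‖ ≤ (1 + ε) * ‖e‖) ∧
      (∀ e : E, ‖(e : Y) - (2 : ℝ) • ((T e : X) : Y)‖ ≤ (1 + ε) * ‖e‖)

/-- `φ : X* → Y*` is a Hahn-Banach extension operator. -/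
def IsHahnBanachExtensionOperator (X : Subspace ℝ Y)
    (φ : (X →L[ℝ] ℝ) →L[ℝ] (Y →L[ℝ] ℝ)) : Prop :=
  ∀ f : X →L[ℝ] ℝ, (∀ x : X, φ f (x : Y) = f x) ∧ ‖φ f‖ = ‖f‖

/-- A set of functionals `V ⊆ Y*` is 1-norming for `Y`. -/
def IsOneNorming (V : Set (Y →L[ℝ] ℝ)) : Prop :=
  ∀ y : Y, ‖y‖ = sSup {r : ℝ | ∃ v ∈ V, ‖v‖ ≤ 1 ∧ r = |v y|}

end Defs

section Props

variable (Z : Type*) [NormedAddCommGroup Z] [NormedSpace ℝ Z]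

/-- A slice of the closed unit ball of `Z`. -/
def IsSlice (S : Set Z) : Prop :=
  ∃ (f : Z →L[ℝ] ℝ) (ε : ℝ), ‖f‖ = 1 ∧ 0 < ε ∧
    S = {z | z ∈ closedBall (0 : Z) 1 ∧ 1 - ε < f z}

/-- The local diameter 2 property. -/
def HasLocalDiameterTwoProperty : Prop :=
  ∀ S : Set Z, IsSlice Z S → Metric.diam S = 2

/-- The diameter 2 property. -/
def HasDiameterTwoProperty : Prop :=
  ∀ U : Set Z, U.Nonempty →
    (∃ V : Set Z, @IsOpen (WeakSpace ℝ Z) _ V ∧ U = V ∩ closedBall (0 : Z) 1) →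
    Metric.diam U = 2

/-- The strong diameter 2 property. -/
def HasStrongDiameterTwoProperty : Prop :=
  ∀ (n : ℕ), 0 < n → ∀ (S : Fin n → Set Z) (lam : Fin n → ℝ),
    (∀ i, IsSlice Z (S i)) → (∀ i, 0 ≤ lam i) → (∑ i, lam i) = 1 →
    Metric.diam {z : Z | ∃ x : Fin n → Z, (∀ i, x i ∈ S i) ∧ z = ∑ i, lam i • x i} = 2

/-- The Daugavet property. -/
def HasDaugavetProperty : Prop :=
  ∀ T : Z →L[ℝ] Z, Module.finrank ℝ (LinearMap.range (T : Z →ₗ[ℝ] Z)) = 1 →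
    ‖ContinuousLinearMap.id ℝ Z + T‖ = 1 + ‖T‖

end Props

/-- `X` is a Gurariĭ space. -/
def IsGurarii (X : Type*) [NormedAddCommGroup X] [NormedSpace ℝ X] : Prop :=
  ∀ ε : ℝ, 0 < ε →
    ∀ (F : Type) [NormedAddCommGroup F] [NormedSpace ℝ F] [FiniteDimensional ℝ F],
      ∀ (E : Subspace ℝ F) (TE : E →ₗᵢ[ℝ] X),
        ∃ TF : F →ₗ[ℝ] X,
          (∀ e : E, TF (e : F) = TE e) ∧
          (∀ f : F, (1 + ε)⁻¹ * ‖f‖ ≤ ‖TF f‖ ∧ ‖TF f‖ ≤ (1 + ε) * ‖f‖)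

/-- `X` is a Lindenstrauss space: its dual is isometric to some `L¹(μ)`. -/
def IsLindenstrauss (X : Type u) [NormedAddCommGroup X] [NormedSpace ℝ X] : Prop :=
  ∃ (α : Type u) (m : MeasurableSpace α) (μ : @MeasureTheory.Measure α m),
    Nonempty ((X →L[ℝ] ℝ) ≃ₗᵢ[ℝ] MeasureTheory.Lp ℝ 1 μ)

/-!
Write a rank-one operator on `X` as `f ⊗ x`. Weak* cluster points of Hahn–Banach extensions of the
functionals `f ∘ T`, where `T` runs through the almost isometric retractions `E → X` provided by
the super-ideal property, give an extension `g ∈ Y*` of `f` that is approximated at every point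
`y` by `f (T y)` for retractions `T` of arbitrarily small distortion. Transporting `y + g y • x`
to `X` by such a retraction on `span {x, y}`, which fixes `x`, shows
`‖id_Y + g ⊗ x‖ ≤ ‖id_X + f ⊗ x‖`; the Daugavet property of `Y` and `‖f‖ ≤ ‖g‖` then give
`1 + ‖f‖ ‖x‖ ≤ ‖id_X + f ⊗ x‖`.
-/

open Filter Topology

section RankOne

variable {𝕜 V W : Type*} [NontriviallyNormedField 𝕜]
  [NormedAddCommGroup V] [NormedSpace 𝕜 V] [NormedAddCommGroup W] [NormedSpace 𝕜 W]

theorem ContinuousLinearMap.exists_eq_smulRight_of_finrank_range_eq_one [CompleteSpace 𝕜]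
    {T : V →L[𝕜] W} (hT : Module.finrank 𝕜 (LinearMap.range (T : V →ₗ[𝕜] W)) = 1) :
    ∃ (f : StrongDual 𝕜 V) (x : W), x ≠ 0 ∧ T = f.smulRight x := by
  obtain ⟨x, -, hx, hle⟩ :=
    (rank_submodule_eq_one_iff _).1 (Module.rank_eq_one_iff_finrank_eq_one.2 hT)
  have hTx (v : V) : T v ∈ 𝕜 ∙ x := hle (LinearMap.mem_range_self _ v)
  let f : StrongDual 𝕜 V :=
    (LinearEquiv.coord 𝕜 W x hx).toLinearMap.toContinuousLinearMap.comp (T.codRestrict _ hTx)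
  exact ⟨f, x, hx, ext fun v => (LinearEquiv.coord_apply_smul 𝕜 W x hx ⟨T v, hTx v⟩).symm⟩

theorem ContinuousLinearMap.finrank_range_smulRight {f : StrongDual 𝕜 V} (hf : f ≠ 0) {x : W}
    (hx : x ≠ 0) : Module.finrank 𝕜 (LinearMap.range (f.smulRight x : V →ₗ[𝕜] W)) = 1 := by
  rw [ContinuousLinearMap.range_smulRight_apply hf, finrank_span_singleton hx]

end RankOne

section Daugavet

variable {Z : Type*} [NormedAddCommGroup Z] [NormedSpace ℝ Z]

theorem HasDaugavetProperty.norm_id_add_smulRight (hZ : HasDaugavetProperty Z)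
    {f : StrongDual ℝ Z} (hf : f ≠ 0) {x : Z} (hx : x ≠ 0) :
    ‖ContinuousLinearMap.id ℝ Z + f.smulRight x‖ = 1 + ‖f‖ * ‖x‖ := by
  rw [hZ _ (ContinuousLinearMap.finrank_range_smulRight hf hx),
    ContinuousLinearMap.norm_smulRight_apply]

theorem hasDaugavetProperty_of_forall_le_norm_id_add_smulRight
    (h : ∀ (f : StrongDual ℝ Z) (x : Z), f ≠ 0 → x ≠ 0 →
      1 + ‖f‖ * ‖x‖ ≤ ‖ContinuousLinearMap.id ℝ Z + f.smulRight x‖) :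
    HasDaugavetProperty Z := by
  intro T hT
  obtain ⟨f, x, hx, rfl⟩ := ContinuousLinearMap.exists_eq_smulRight_of_finrank_range_eq_one hT
  have hf : f ≠ 0 := by
    rintro rfl
    rw [ContinuousLinearMap.zero_smulRight, ContinuousLinearMap.toLinearMap_zero,
      LinearMap.range_zero, finrank_bot] at hT
    exact zero_ne_one hT
  rw [ContinuousLinearMap.norm_smulRight_apply]
  refine le_antisymm ?_ (h f x hf hx)
  calc _ ≤ ‖ContinuousLinearMap.id ℝ Z‖ + ‖f.smulRight x‖ := norm_add_le _ _
    _ ≤ 1 + ‖f‖ * ‖x‖ := by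
      rw [ContinuousLinearMap.norm_smulRight_apply]
      gcongr
      exact ContinuousLinearMap.norm_id_le

end Daugavet

theorem WeakDual.exists_forall_frequently_dist_lt {𝕜 E ι : Type*} [NontriviallyNormedField 𝕜]
    [ProperSpace 𝕜] [SeminormedAddCommGroup E] [NormedSpace 𝕜 E] {l : Filter ι} [l.NeBot]
    (φ : ι → StrongDual 𝕜 E) {C : ℝ} (hφ : ∀ i, ‖φ i‖ ≤ C) :
    ∃ ψ : StrongDual 𝕜 E, ∀ (y : E) (δ : ℝ), 0 < δ → ∃ᶠ i in l, dist (φ i y) (ψ y) < δ := by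
  obtain ⟨ψ, -, hψ⟩ := (isCompact_closedBall (0 : StrongDual 𝕜 E) C).exists_mapClusterPt
    (u := fun i => StrongDual.toWeakDual (φ i)) (f := l)
    (le_principal_iff.2 <| mem_map.2 <| Eventually.of_forall fun i => by simpa using hφ i)
  refine ⟨toStrongDual ψ, fun y δ hδ => mapClusterPt_iff_frequently.1 hψ
    ((fun ψ' : WeakDual 𝕜 E => ψ' y) ⁻¹' Metric.ball (ψ y) δ) ?_⟩
  exact (eval_continuous y).continuousAt.preimage_mem_nhds (Metric.ball_mem_nhds _ hδ)

section SuperIdeal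

variable {Y : Type*} [NormedAddCommGroup Y] [NormedSpace ℝ Y] {X : Subspace ℝ Y}

def IsAlmostIsometricRetraction (X : Subspace ℝ Y) {E : Subspace ℝ Y} (ε : ℝ)
    (T : E →ₗ[ℝ] X) : Prop :=
  (∀ e : E, (e : Y) ∈ X → ((T e : X) : Y) = (e : Y)) ∧
    ∀ e : E, (1 + ε)⁻¹ * ‖e‖ ≤ ‖T e‖ ∧ ‖T e‖ ≤ (1 + ε) * ‖e‖

namespace IsAlmostIsometricRetraction

variable {E F : Subspace ℝ Y} {ε δ : ℝ} {T : E →ₗ[ℝ] X}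

theorem mono (hT : IsAlmostIsometricRetraction X ε T) (hε : 0 ≤ ε) (hεδ : ε ≤ δ) :
    IsAlmostIsometricRetraction X δ T := by
  refine ⟨hT.1, fun e => ⟨le_trans ?_ (hT.2 e).1, (hT.2 e).2.trans ?_⟩⟩ <;> gcongr

theorem comp_inclusion (hT : IsAlmostIsometricRetraction X ε T) (hFE : F ≤ E) :
    IsAlmostIsometricRetraction X ε (T ∘ₗ Submodule.inclusion hFE) :=
  ⟨fun e => hT.1 (Submodule.inclusion hFE e), fun e => hT.2 (Submodule.inclusion hFE e)⟩

theorem apply_of_mem (hT : IsAlmostIsometricRetraction X ε T) {e : E} (he : (e : Y) ∈ X) :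
    T e = ⟨e, he⟩ :=
  Subtype.ext (hT.1 e he)

theorem norm_le_mul_norm_apply (hT : IsAlmostIsometricRetraction X ε T) (hε : 0 ≤ ε) (e : E) :
    ‖e‖ ≤ (1 + ε) * ‖T e‖ :=
  (inv_mul_le_iff₀ (by positivity)).1 (hT.2 e).1

theorem opNorm_le [FiniteDimensional ℝ E] (hT : IsAlmostIsometricRetraction X ε T)
    (hε : 0 ≤ ε) : ‖LinearMap.toContinuousLinearMap T‖ ≤ 1 + ε :=
  ContinuousLinearMap.opNorm_le_bound _ (by positivity) fun e => (hT.2 e).2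

end IsAlmostIsometricRetraction

theorem IsSuperIdeal.exists_isAlmostIsometricRetraction (hX : IsSuperIdeal X) {ε : ℝ}
    (hε : 0 < ε) (E : Subspace ℝ Y) [FiniteDimensional ℝ E] :
    ∃ T : E →ₗ[ℝ] X, IsAlmostIsometricRetraction X ε T :=
  hX ε hε E ‹_›

/-- `g` is a weak* limit of the functionals `f ∘ T`, `T` almost isometric retractions. -/
def IsRetractionLimit (X : Subspace ℝ Y) (f : StrongDual ℝ X) (g : StrongDual ℝ Y) : Prop :=
  ∀ F : Subspace ℝ Y, FiniteDimensional ℝ F → ∀ (y : F) (δ : ℝ), 0 < δ →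
    ∃ T : F →ₗ[ℝ] X, IsAlmostIsometricRetraction X δ T ∧ dist (f (T y)) (g y) < δ

theorem IsSuperIdeal.exists_isRetractionLimit (hX : IsSuperIdeal X) (f : StrongDual ℝ X) :
    ∃ g, IsRetractionLimit X f g := by
  let E (s : Finset Y) : Subspace ℝ Y := Submodule.span ℝ s
  choose T hT using fun i : Finset Y × ℕ =>
    hX.exists_isAlmostIsometricRetraction (Nat.one_div_pos_of_nat (n := i.2)) (E i.1)
  have hT₁ (i : Finset Y × ℕ) : IsAlmostIsometricRetraction X 1 (T i) :=
    (hT i).mono Nat.one_div_pos_of_nat.le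
      (by simpa using Nat.one_div_le_one_div (α := ℝ) i.2.zero_le)
  choose φ hφ hφnorm using fun i : Finset Y × ℕ =>
    exists_extension_norm_eq (E i.1) (f.comp (LinearMap.toContinuousLinearMap (T i)))
  obtain ⟨g, hg⟩ := WeakDual.exists_forall_frequently_dist_lt (l := atTop ×ˢ atTop) φ
    (C := ‖f‖ * (1 + 1)) fun i => by
      rw [hφnorm]
      exact (f.opNorm_comp_le _).trans (by gcongr; exact (hT₁ i).opNorm_le zero_le_one)
  refine ⟨g, fun F _ y δ hδ => ?_⟩
  obtain ⟨s, hs⟩ := Module.Finite.iff_fg.1 ‹FiniteDimensional ℝ F›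
  have hev : ∀ᶠ i : Finset Y × ℕ in atTop ×ˢ atTop, F ≤ E i.1 ∧ 1 / ((i.2 : ℝ) + 1) < δ :=
    ((eventually_ge_atTop s).mono fun t hst => hs ▸ Submodule.span_mono hst).prod_mk
      (tendsto_one_div_add_atTop_nhds_zero_nat.eventually (gt_mem_nhds hδ))
  obtain ⟨i, hdist, hFE, hεδ⟩ := ((hg y δ hδ).and_eventually hev).exists
  refine ⟨T i ∘ₗ Submodule.inclusion hFE,
    ((hT i).mono Nat.one_div_pos_of_nat.le hεδ.le).comp_inclusion hFE, ?_⟩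
  convert hdist using 2
  exact (hφ i (Submodule.inclusion hFE y)).symm

namespace IsRetractionLimit

variable {f : StrongDual ℝ X} {g : StrongDual ℝ Y}

theorem apply_coe (hg : IsRetractionLimit X f g) (x : X) : g x = f x := by
  refine (eq_of_forall_dist_le fun δ hδ => ?_).symm
  have hx : (x : Y) ∈ ℝ ∙ (x : Y) := Submodule.mem_span_singleton_self _
  obtain ⟨T, hT, hdist⟩ := hg _ inferInstance ⟨x, hx⟩ δ hδ
  rw [hT.apply_of_mem x.2] at hdist
  exact hdist.le

theorem norm_le (hg : IsRetractionLimit X f g) : ‖f‖ ≤ ‖g‖ :=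
  f.opNorm_le_bound (norm_nonneg g) fun x => by
    simpa [hg.apply_coe x] using g.le_opNorm x

theorem norm_add_smul_le (hg : IsRetractionLimit X f g) (x : X) (y : Y) :
    ‖y + g y • (x : Y)‖ ≤ ‖ContinuousLinearMap.id ℝ X + f.smulRight x‖ * ‖y‖ := by
  set A := ContinuousLinearMap.id ℝ X + f.smulRight x
  suffices key : ∀ δ > 0, ‖y + g y • (x : Y)‖ ≤ (1 + δ) * ((1 + δ) * (‖A‖ * ‖y‖) + δ * ‖x‖) by
    have hlim : Tendsto (fun δ : ℝ => (1 + δ) * ((1 + δ) * (‖A‖ * ‖y‖) + δ * ‖x‖)) (𝓝[>] 0)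
        (𝓝 (‖A‖ * ‖y‖)) :=
      ((Continuous.tendsto' (by fun_prop) 0 _ (by simp)).mono_left nhdsWithin_le_nhds)
    exact ge_of_tendsto hlim (eventually_nhdsWithin_of_forall key)
  intro δ hδ
  let F := ℝ ∙ (x : Y) ⊔ ℝ ∙ y
  have hxF : (x : Y) ∈ F := Submodule.mem_sup_left (Submodule.mem_span_singleton_self _)
  have hyF : y ∈ F := Submodule.mem_sup_right (Submodule.mem_span_singleton_self _)
  obtain ⟨T, hT, hdist⟩ := hg F inferInstance ⟨y, hyF⟩ δ hδ
  set u := T ⟨y, hyF⟩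
  have hTw : T (⟨y, hyF⟩ + g y • ⟨x, hxF⟩) = A u + (g y - f u) • x := by
    rw [map_add, map_smul, hT.apply_of_mem (e := ⟨x, hxF⟩) x.2]
    simp only [A, add_apply, ContinuousLinearMap.id_apply, ContinuousLinearMap.smulRight_apply]
    module
  have hgf : ‖(g y - f u) • x‖ ≤ δ * ‖x‖ := by
    rw [norm_smul, ← dist_eq_norm, dist_comm]
    gcongr
  calc ‖y + g y • (x : Y)‖ = ‖(⟨y, hyF⟩ + g y • ⟨x, hxF⟩ : F)‖ := rfl
    _ ≤ (1 + δ) * ‖A u + (g y - f u) • x‖ := hTw ▸ hT.norm_le_mul_norm_apply hδ.le _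
    _ ≤ (1 + δ) * (‖A‖ * ‖u‖ + δ * ‖x‖) := by
      gcongr
      exact (norm_add_le _ _).trans (add_le_add (A.le_opNorm u) hgf)
    _ ≤ (1 + δ) * (‖A‖ * ((1 + δ) * ‖y‖) + δ * ‖x‖) := by
      gcongr
      exact (hT.2 _).2
    _ = (1 + δ) * ((1 + δ) * (‖A‖ * ‖y‖) + δ * ‖x‖) := by ring

theorem norm_id_add_smulRight_le (hg : IsRetractionLimit X f g) (x : X) :
    ‖ContinuousLinearMap.id ℝ Y + g.smulRight (x : Y)‖ ≤
      ‖ContinuousLinearMap.id ℝ X + f.smulRight x‖ :=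
  ContinuousLinearMap.opNorm_le_bound _ (by positivity) (hg.norm_add_smul_le x)

end IsRetractionLimit

end SuperIdeal

theorem superIdeal_daugavetProperty_general
    (Y : Type*) [NormedAddCommGroup Y] [NormedSpace ℝ Y]
    (X : Subspace ℝ Y)
    (hX : IsSuperIdeal X) (hY : HasDaugavetProperty Y) :
    HasDaugavetProperty X := by
  refine hasDaugavetProperty_of_forall_le_norm_id_add_smulRight fun f x hf hx => ?_
  obtain ⟨g, hg⟩ := hX.exists_isRetractionLimit f
  have hg0 : g ≠ 0 := fun h => hf (ContinuousLinearMap.ext fun x => by simp [← hg.apply_coe, h])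
  calc 1 + ‖f‖ * ‖x‖ ≤ 1 + ‖g‖ * ‖x‖ := by gcongr; exact hg.norm_le
    _ = ‖ContinuousLinearMap.id ℝ Y + g.smulRight (x : Y)‖ :=
      (hY.norm_id_add_smulRight hg0 (by simpa using hx)).symm
    _ ≤ ‖ContinuousLinearMap.id ℝ X + f.smulRight x‖ := hg.norm_id_add_smulRight_le x

theorem superIdeal_daugavetProperty
    (Y : Type*) [NormedAddCommGroup Y] [NormedSpace ℝ Y] [CompleteSpace Y]
    (X : Subspace ℝ Y) (hXc : IsClosed (X : Set Y)) [Nontrivial X]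
    (hX : IsSuperIdeal X) (hY : HasDaugavetProperty Y) :
    HasDaugavetProperty X :=
  superIdeal_daugavetProperty_general Y X hX hY
end

section
/- Every non-trivial Banach space X is a 1-complemented subspace of a Banach space with the Daugavet property: there exist a Banach space Z with the Daugavet property, a linear isometric embedding i : X → Z, and a bounded linear projection P : Z → Z with ‖P‖ = 1 whose range equals i(X). -/
/-! Take `Z = C([0, 1], X)`: the constant functions form an isometric copy of `X`, and
`f ↦ const (f 0)` is a norm-one projection onto them.

`C(K, X)` has the Daugavet property for every perfect compact Hausdorff `K`, through the slice
criterion. Given a unit vector `y`, a functional `c` and `ε > 0`, take `f` in the unit ball with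
`c f > ‖c‖ - ε / 2`, and `n` points `p` where `‖y p‖ > 1 - ε`, carrying Urysohn bumps `φ p` with
disjoint supports. The functions `f + φ p • (y p / ‖y p‖ - f)` lie in the unit ball and their
deviations from `f` add up to a function of norm at most `2`, so `c` loses at most `2‖c‖ / n` on
one of them; at its point `p` that function plus `y` has norm `1 + ‖y p‖ > 2 - ε`. The criterion
gives `‖I + c ⊗ g‖ = 1 + ‖c‖ ‖g‖` through the estimate `(1 + a) (‖x + y‖ - 1) ≤ ‖x + a • y‖`
for `x`, `y` in the unit ball and `a ≥ 0`. -/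

universe u v

open Metric Set

/-- A Banach superspace with the Daugavet property in which `X` embeds
isometrically as a 1-complemented subspace. -/
structure DaugavetSuperspace (X : Type u) [NormedAddCommGroup X] [NormedSpace ℝ X] where
  Z : Type u
  [nZ : NormedAddCommGroup Z]
  [sZ : NormedSpace ℝ Z]
  [cZ : CompleteSpace Z]
  daugavet : HasDaugavetProperty Z
  i : X →ₗᵢ[ℝ] Z
  P : Z →L[ℝ] Z
  idem : ∀ z : Z, P (P z) = P z
  norm_one : ‖P‖ = 1
  range_eq : Set.range (fun z => P z) = Set.range i

open Filter Topology

section RankOne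

variable {E F : Type*} [NormedAddCommGroup E] [NormedSpace ℝ E]
  [NormedAddCommGroup F] [NormedSpace ℝ F]

theorem ContinuousLinearMap.exists_eq_smulRight_of_finrank_range_eq_one_s14 (T : E →L[ℝ] F)
    (hT : Module.finrank ℝ (LinearMap.range (T : E →ₗ[ℝ] F)) = 1) :
    ∃ (c : E →L[ℝ] ℝ) (g : F), g ≠ 0 ∧ T = c.smulRight g := by
  obtain ⟨⟨g, hgT⟩, hg, hspan⟩ := finrank_eq_one_iff'.mp hT
  replace hg : g ≠ 0 := fun h => hg (Subtype.ext h)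
  obtain ⟨φ, -, hφg⟩ := exists_dual_vector ℝ g (norm_ne_zero_iff.mpr hg)
  refine ⟨‖g‖⁻¹ • φ.comp T, g, hg, ?_⟩
  ext x
  obtain ⟨a, ha⟩ := hspan ⟨T x, LinearMap.mem_range_self _ x⟩
  replace ha : a • g = T x := congrArg Subtype.val ha
  have hg' : ‖g‖ ≠ 0 := norm_ne_zero_iff.mpr hg
  simp [← ha, hφg, hg', mul_comm a]

end RankOne

theorem one_add_mul_le_norm_add_smul {E : Type*} [SeminormedAddCommGroup E] [NormedSpace ℝ E]
    {x y : E} (hx : ‖x‖ ≤ 1) (hy : ‖y‖ ≤ 1) {a : ℝ} (ha : 0 ≤ a) :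
    (1 + a) * (‖x + y‖ - 1) ≤ ‖x + a • y‖ := by
  have hxy : ‖x + y‖ ≤ 2 := (norm_add_le x y).trans (by linarith)
  rcases le_total a 1 with ha1 | ha1
  · have : ‖x + y‖ ≤ ‖x + a • y‖ + (1 - a) * ‖y‖ := by
      calc ‖x + y‖ = ‖(x + a • y) + (1 - a) • y‖ := by rw [add_assoc, ← add_smul]; simp
        _ ≤ ‖x + a • y‖ + (1 - a) * ‖y‖ := by
          grw [norm_add_le, norm_smul, Real.norm_of_nonneg (by linarith)]
    nlinarith
  · have : a * ‖x + y‖ ≤ ‖x + a • y‖ + (a - 1) * ‖x‖ := by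
      calc a * ‖x + y‖ = ‖a • (x + y)‖ := by rw [norm_smul, Real.norm_of_nonneg ha]
        _ = ‖(x + a • y) + (a - 1) • x‖ := by congr 1; module
        _ ≤ ‖x + a • y‖ + (a - 1) * ‖x‖ := by
          grw [norm_add_le, norm_smul, Real.norm_of_nonneg (by linarith)]
    nlinarith

section Daugavet

variable (Z : Type*) [NormedAddCommGroup Z] [NormedSpace ℝ Z]

/-- The slice characterization of the Daugavet property (Kadets, Shvidkoy, Sirotkin, Werner). -/
def HasDaugavetSlices : Prop :=
  ∀ y : Z, ‖y‖ = 1 → ∀ c : Z →L[ℝ] ℝ, ∀ ε > 0,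
    ∃ x : Z, ‖x‖ ≤ 1 ∧ ‖c‖ - ε < c x ∧ 2 - ε < ‖x + y‖

variable {Z}

theorem HasDaugavetSlices.hasDaugavetProperty (hZ : HasDaugavetSlices Z) :
    HasDaugavetProperty Z := by
  intro T hT
  obtain ⟨c, g, hg, rfl⟩ := T.exists_eq_smulRight_of_finrank_range_eq_one_s14 hT
  have hc : 0 < ‖c‖ := by
    refine norm_pos_iff.mpr fun hc => ?_
    rw [hc, ContinuousLinearMap.zero_smulRight, ContinuousLinearMap.toLinearMap_zero,
      LinearMap.range_zero, finrank_bot] at hT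
    exact zero_ne_one hT
  rw [ContinuousLinearMap.norm_smulRight_apply]
  refine le_antisymm ((norm_add_le _ _).trans ?_) ?_
  · rw [ContinuousLinearMap.norm_smulRight_apply]
    grw [ContinuousLinearMap.norm_id_le]
  have key : ∀ ε ∈ Ioo 0 (min ‖c‖ 1),
      (1 + (‖c‖ - ε) * ‖g‖) * (1 - ε) ≤ ‖ContinuousLinearMap.id ℝ Z + c.smulRight g‖ := by
    rintro ε ⟨hε, hεc⟩
    rw [lt_min_iff] at hεc
    have hy : ‖‖g‖⁻¹ • g‖ = 1 := norm_smul_inv_norm (𝕜 := ℝ) hg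
    obtain ⟨x, hx, hcx, hxy⟩ := hZ (‖g‖⁻¹ • g) hy c ε hε
    have happ :
        (ContinuousLinearMap.id ℝ Z + c.smulRight g) x = x + (c x * ‖g‖) • (‖g‖⁻¹ • g) := by
      simp [smul_smul, norm_ne_zero_iff.mpr hg]
    have ha : 0 ≤ c x * ‖g‖ := by nlinarith [norm_nonneg g]
    have hlow := one_add_mul_le_norm_add_smul hx hy.le ha
    rw [← happ] at hlow
    calc (1 + (‖c‖ - ε) * ‖g‖) * (1 - ε) ≤ (1 + c x * ‖g‖) * (‖x + ‖g‖⁻¹ • g‖ - 1) :=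
          mul_le_mul (by gcongr) (by linarith) (by linarith) (by linarith)
      _ ≤ _ := hlow.trans (ContinuousLinearMap.unit_le_opNorm _ _ hx)
  have hlim : Tendsto (fun ε => (1 + (‖c‖ - ε) * ‖g‖) * (1 - ε)) (𝓝[>] 0)
      (𝓝 (1 + ‖c‖ * ‖g‖)) := by
    have : Continuous fun ε : ℝ => (1 + (‖c‖ - ε) * ‖g‖) * (1 - ε) := by fun_prop
    simpa using (this.tendsto 0).mono_left nhdsWithin_le_nhds
  exact le_of_tendsto hlim (eventually_of_mem (Ioo_mem_nhdsGT (lt_min hc one_pos)) key)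

end Daugavet

theorem ContinuousLinearMap.exists_norm_le_one_lt_apply {E : Type*} [NormedAddCommGroup E]
    [NormedSpace ℝ E] (c : E →L[ℝ] ℝ) {r : ℝ} (hr : r < ‖c‖) : ∃ x, ‖x‖ ≤ 1 ∧ r < c x := by
  obtain ⟨x, hx, hrx⟩ := c.exists_lt_apply_of_lt_opNorm hr
  rcases le_total 0 (c x) with h | h
  · exact ⟨x, hx.le, by rwa [Real.norm_of_nonneg h] at hrx⟩
  · exact ⟨-x, by rw [norm_neg]; exact hx.le, by rw [map_neg]; rwa [Real.norm_of_nonpos h] at hrx⟩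

theorem exists_mem_neg_le_apply_of_norm_sum_le {ι E : Type*} [SeminormedAddCommGroup E]
    [NormedSpace ℝ E] (c : E →L[ℝ] ℝ) {S : Finset ι} (hS : S.Nonempty) {h : ι → E} {M : ℝ}
    (hM : ‖∑ i ∈ S, h i‖ ≤ M) : ∃ i ∈ S, -(‖c‖ * M / S.card) ≤ c (h i) := by
  refine Finset.exists_le_of_sum_le hS ?_
  have hcard : (S.card : ℝ) ≠ 0 := by exact_mod_cast hS.card_pos.ne'
  calc ∑ _i ∈ S, -(‖c‖ * M / S.card) = -(‖c‖ * M) := by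
        rw [Finset.sum_const, nsmul_eq_mul]; field_simp
    _ ≤ -‖c (∑ i ∈ S, h i)‖ := by grw [neg_le_neg_iff, c.le_opNorm, hM]
    _ ≤ ∑ i ∈ S, c (h i) := by rw [← map_sum]; exact neg_le_of_abs_le (Real.norm_eq_abs _).le

section ContinuousMap

open ContinuousMap

variable {K X : Type*} [TopologicalSpace K]

theorem Finset.exists_continuous_sum_le_one [T2Space K] [NormalSpace K] (S : Finset K) :
    ∃ φ : K → C(K, ℝ), (∀ p ∈ S, φ p p = 1) ∧ (∀ p t, φ p t ∈ Set.Icc (0 : ℝ) 1) ∧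
      ∀ t, ∑ p ∈ S, φ p t ≤ 1 := by
  obtain ⟨U, hU, hdisj⟩ := S.finite_toSet.t2_separation
  have hbump : ∀ p, ∃ f : C(K, ℝ),
      EqOn f 0 (U p)ᶜ ∧ EqOn f 1 {p} ∧ ∀ t, f t ∈ Set.Icc (0 : ℝ) 1 := fun p =>
    exists_continuous_zero_one_of_isClosed (hU p).2.isClosed_compl isClosed_singleton
      (Set.disjoint_singleton_right.mpr fun h => h (hU p).1)
  choose φ hφ0 hφ1 hφI using hbump
  refine ⟨φ, fun p _ => hφ1 p rfl, hφI, fun t => ?_⟩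
  have hsupp : ∀ p, φ p t ≠ 0 → t ∈ U p := fun p h => by_contra fun ht => h (hφ0 p ht)
  by_cases ht : ∃ q ∈ S, t ∈ U q
  · obtain ⟨q, hq, htq⟩ := ht
    rw [Finset.sum_eq_single_of_mem q hq fun p hp hpq => by_contra fun hne =>
      Set.disjoint_left.mp (hdisj hp hq hpq) (hsupp p hne) htq]
    exact (hφI q t).2
  · push Not at ht
    rw [Finset.sum_eq_zero fun p hp => by_contra fun hne => ht p hp (hsupp p hne)]
    exact zero_le_one

variable [CompactSpace K] [NormedAddCommGroup X] [NormedSpace ℝ X]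

theorem ContinuousMap.norm_add_smul_const_sub_le_one {f : C(K, X)} (hf : ‖f‖ ≤ 1) {u : X}
    (hu : ‖u‖ ≤ 1) {φ : C(K, ℝ)} (hφ : ∀ t, φ t ∈ Set.Icc (0 : ℝ) 1) :
    ‖f + φ • (const K u - f)‖ ≤ 1 := by
  refine (norm_le _ zero_le_one).mpr fun t => ?_
  have hft : f t ∈ closedBall (0 : X) 1 :=
    mem_closedBall_zero_iff.mpr ((norm_coe_le_norm f t).trans hf)
  simpa using (convex_closedBall (0 : X) 1).add_smul_sub_mem hft
    (mem_closedBall_zero_iff.mpr hu) (hφ t)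

theorem ContinuousMap.norm_sum_smul_const_sub_le_two {ι : Type*} (S : Finset ι) {f : C(K, X)}
    (hf : ‖f‖ ≤ 1) {u : ι → X} (hu : ∀ i, ‖u i‖ ≤ 1) {φ : ι → C(K, ℝ)}
    (hφ : ∀ i t, 0 ≤ φ i t) (hsum : ∀ t, ∑ i ∈ S, φ i t ≤ 1) :
    ‖∑ i ∈ S, φ i • (const K (u i) - f)‖ ≤ 2 := by
  refine (norm_le _ zero_le_two).mpr fun t => ?_
  have hdiff : ∀ i, ‖u i - f t‖ ≤ 2 := fun i =>
    (norm_sub_le _ _).trans (by linarith [hu i, (norm_coe_le_norm f t).trans hf])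
  calc ‖(∑ i ∈ S, φ i • (const K (u i) - f)) t‖ ≤ ∑ i ∈ S, φ i t * ‖u i - f t‖ := by
        simpa [ContinuousMap.sum_apply, norm_smul, Real.norm_of_nonneg (hφ _ t)] using
          norm_sum_le S fun i => φ i t • (u i - f t)
    _ ≤ ∑ i ∈ S, φ i t * 2 := by gcongr with i; exacts [hφ i t, hdiff i]
    _ ≤ 2 := by rw [← Finset.sum_mul]; nlinarith [hsum t]

theorem ContinuousMap.hasDaugavetSlices [T2Space K] [PerfectSpace K] :
    HasDaugavetSlices C(K, X) := by
  intro y hy c ε hε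
  obtain ⟨f, hf, hcf⟩ := c.exists_norm_le_one_lt_apply (sub_lt_self ‖c‖ (half_pos hε))
  have : Nonempty K := by
    by_contra hK
    rw [not_nonempty_iff] at hK
    simp [Subsingleton.elim y 0] at hy
  -- `max … 0` keeps `y p ≠ 0` at the chosen points, so that `u p` below is a unit vector.
  obtain ⟨t₀, ht₀⟩ : ∃ t, max (1 - ε) 0 < ‖y t‖ :=
    exists_lt_of_lt_ciSup (by rw [← norm_eq_iSup_norm, hy]; exact max_lt (by linarith) one_pos)
  obtain ⟨n, hn⟩ := exists_nat_gt (4 * ‖c‖ / ε)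
  have hn0 : 0 < n := by exact_mod_cast (by positivity : 0 ≤ 4 * ‖c‖ / ε).trans_lt hn
  have hU : {t | max (1 - ε) 0 < ‖y t‖} ∈ 𝓝 t₀ :=
    (isOpen_lt continuous_const (by fun_prop)).mem_nhds ht₀
  obtain ⟨S, hSU, hSn⟩ := (infinite_of_mem_nhds t₀ hU).exists_subset_card_eq n
  obtain ⟨φ, hφp, hφI, hφsum⟩ := S.exists_continuous_sum_le_one
  set u : K → X := fun p => ‖y p‖⁻¹ • y p
  have hu : ∀ p, ‖u p‖ ≤ 1 := fun p => by
    rcases eq_or_ne (y p) 0 with h | h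
    · simp [u, h]
    · exact (norm_smul_inv_norm (𝕜 := ℝ) h).le
  obtain ⟨p, hpS, hp⟩ := exists_mem_neg_le_apply_of_norm_sum_le c
    (Finset.card_pos.mp (hSn ▸ hn0))
    (norm_sum_smul_const_sub_le_two S hf hu (fun p t => (hφI p t).1) hφsum)
  obtain ⟨hyp, hyp0⟩ : 1 - ε < ‖y p‖ ∧ 0 < ‖y p‖ := max_lt_iff.mp (hSU hpS)
  refine ⟨f + φ p • (const K (u p) - f), norm_add_smul_const_sub_le_one hf (hu p) (hφI p), ?_, ?_⟩
  · have : ‖c‖ * 2 / S.card ≤ ε / 2 := by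
      rw [hSn, div_le_iff₀ (by exact_mod_cast hn0)]
      rw [div_lt_iff₀ hε] at hn
      nlinarith
    rw [map_add]
    linarith
  · have hval : (f + φ p • (const K (u p) - f) + y) p = (‖y p‖⁻¹ + 1) • y p := by
      simp [u, hφp p hpS, add_smul]
    calc 2 - ε < ‖y p‖⁻¹ * ‖y p‖ + ‖y p‖ := by
          rw [inv_mul_cancel₀ hyp0.ne']; linarith
      _ = ‖(f + φ p • (const K (u p) - f) + y) p‖ := by
          rw [hval, norm_smul, Real.norm_of_nonneg (by positivity)]; ring
      _ ≤ _ := norm_coe_le_norm _ p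

variable (X) in
def ContinuousMap.constEvalCLM (t₀ : K) : C(K, X) →L[ℝ] C(K, X) :=
  (ContinuousLinearMap.const ℝ K).comp (evalCLM ℝ t₀)

variable [Nonempty K]

theorem ContinuousMap.norm_const_eq {E : Type*} [NormedAddCommGroup E] (x : E) :
    ‖const K x‖ = ‖x‖ :=
  le_antisymm ((norm_le _ (norm_nonneg x)).mpr fun _ => le_rfl)
    ((const K x).norm_coe_le_norm (Classical.arbitrary K))

variable (K X) in
def ContinuousMap.constₗᵢ : X →ₗᵢ[ℝ] C(K, X) :=
  { (ContinuousLinearMap.const ℝ K : X →L[ℝ] C(K, X)).toLinearMap with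
    norm_map' := norm_const_eq }

theorem ContinuousMap.range_constEvalCLM (t₀ : K) :
    Set.range (constEvalCLM X t₀) = Set.range (constₗᵢ K X) := by
  ext g
  constructor
  · rintro ⟨h, rfl⟩
    exact ⟨h t₀, rfl⟩
  · rintro ⟨x, rfl⟩
    exact ⟨const K x, rfl⟩

theorem ContinuousMap.norm_constEvalCLM [Nontrivial X] (t₀ : K) : ‖constEvalCLM X t₀‖ = 1 := by
  refine le_antisymm (ContinuousLinearMap.opNorm_le_bound _ zero_le_one fun g => ?_) ?_
  · change ‖const K (g t₀)‖ ≤ 1 * ‖g‖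
    rw [norm_const_eq, one_mul]
    exact norm_coe_le_norm g t₀
  · obtain ⟨x, hx⟩ := exists_ne (0 : X)
    have hle := (constEvalCLM X t₀).le_opNorm (const K x)
    change ‖const K x‖ ≤ _ * ‖const K x‖ at hle
    exact le_of_mul_le_mul_right (by simpa using hle) (by rwa [norm_const_eq, norm_pos_iff])

end ContinuousMap

theorem exists_daugavet_superspace
    (X : Type u) [NormedAddCommGroup X] [NormedSpace ℝ X]
    [CompleteSpace X] [Nontrivial X] :
    Nonempty (DaugavetSuperspace X) :=
  ⟨{ Z := C(unitInterval, X)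
     daugavet := ContinuousMap.hasDaugavetSlices.hasDaugavetProperty
     i := ContinuousMap.constₗᵢ unitInterval X
     P := ContinuousMap.constEvalCLM X 0
     idem := fun _ => rfl
     norm_one := ContinuousMap.norm_constEvalCLM 0
     range_eq := ContinuousMap.range_constEvalCLM 0 }⟩
end

section
/- Let X be a Banach space which is a super-ideal in every superspace, i.e., for every Banach space Y and every linear isometric embedding i : X → Y, the subspace i(X) is a super-ideal in Y. Then X is a Gurariĭ space. -/
/-!
Amalgamate `X` and `F` over `E` in the push-out `Y = (X ⊕₁ F) / {(TE e, -e) | e ∈ E}`. The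
canonical maps `X → Y` and `F → Y` are isometric and agree on `E`, and `Y` is a Banach space.
Since `X` is a super-ideal in `Y`, the finite-dimensional copy of `F` in `Y` is carried into `X`
by a `(1 + ε)`-isometry fixing its intersection with `X`, which contains the copy of `E`; this
is the required extension of `TE`.
-/

universe u v

open Metric Set

noncomputable section

namespace LinearIsometry

variable {X F : Type*} [NormedAddCommGroup X] [NormedSpace ℝ X]
  [NormedAddCommGroup F] [NormedSpace ℝ F] {E : Submodule ℝ F} (TE : E →ₗᵢ[ℝ] X)

def pushoutKer : Submodule ℝ (WithLp 1 (X × F)) :=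
  LinearMap.range <|
    (WithLp.linearEquiv 1 ℝ (X × F)).symm.toLinearMap ∘ₗ TE.toLinearMap.prod (-E.subtype)

instance [FiniteDimensional ℝ E] : FiniteDimensional ℝ (pushoutKer TE) :=
  Module.Finite.range _

instance [FiniteDimensional ℝ E] : IsClosed (pushoutKer TE : Set (WithLp 1 (X × F))) :=
  Submodule.closed_of_finiteDimensional _

abbrev Pushout := WithLp 1 (X × F) ⧸ pushoutKer TE

def pushoutMk : X × F →ₗ[ℝ] Pushout TE :=
  (pushoutKer TE).mkQ ∘ₗ (WithLp.linearEquiv 1 ℝ (X × F)).symm.toLinearMap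

theorem pushoutMk_add_sub (x : X) (f : F) (e : E) :
    pushoutMk TE (x + TE e, f - e) = pushoutMk TE (x, f) := by
  refine (Submodule.Quotient.eq _).2 ⟨e, ?_⟩
  rw [WithLp.ext_iff]
  ext <;> simp

theorem norm_pushoutMk_le (x : X) (f : F) : ‖pushoutMk TE (x, f)‖ ≤ ‖x‖ + ‖f‖ :=
  (Submodule.Quotient.norm_mk_le _ _).trans_eq (WithLp.prod_norm_eq_of_L1 _)

theorem le_norm_pushoutMk {r : ℝ} {x : X} {f : F}
    (h : ∀ e : E, r ≤ ‖x + TE e‖ + ‖f - e‖) : r ≤ ‖pushoutMk TE (x, f)‖ := by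
  refine QuotientAddGroup.le_norm_iff.2 fun m hm => ?_
  obtain ⟨e, he⟩ : m - WithLp.toLp 1 (x, f) ∈ pushoutKer TE := (Submodule.Quotient.eq _).1 hm
  have hm : m = WithLp.toLp 1 (x + TE e, f - e) := by
    rw [← sub_add_cancel m (WithLp.toLp 1 (x, f)), ← he, WithLp.ext_iff]
    ext <;> simp [add_comm, sub_eq_neg_add]
  rw [hm, WithLp.prod_norm_eq_of_L1]
  exact h e

def pushoutInl : X →ₗᵢ[ℝ] Pushout TE where
  toLinearMap := pushoutMk TE ∘ₗ LinearMap.inl ℝ X F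
  norm_map' x := le_antisymm ((norm_pushoutMk_le TE x 0).trans_eq (by simp))
    (le_norm_pushoutMk TE fun e => by simpa using norm_le_norm_add_norm_sub' x (x + TE e))

def pushoutInr : F →ₗᵢ[ℝ] Pushout TE where
  toLinearMap := pushoutMk TE ∘ₗ LinearMap.inr ℝ X F
  norm_map' f := le_antisymm ((norm_pushoutMk_le TE 0 f).trans_eq (by simp))
    (le_norm_pushoutMk TE fun e => by simpa using norm_le_norm_add_norm_sub' f e)

theorem pushoutInr_apply_coe (e : E) : pushoutInr TE e = pushoutInl TE (TE e) := by
  show pushoutMk TE (0, e) = pushoutMk TE (TE e, 0)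
  simpa using (pushoutMk_add_sub TE 0 e e).symm

end LinearIsometry

end

theorem IsSuperIdeal.exists_lift {X Y F : Type*} [NormedAddCommGroup X] [NormedSpace ℝ X]
    [NormedAddCommGroup Y] [NormedSpace ℝ Y] [NormedAddCommGroup F] [NormedSpace ℝ F]
    [FiniteDimensional ℝ F] {j : X →ₗᵢ[ℝ] Y} (hj : IsSuperIdeal (LinearMap.range j.toLinearMap))
    (g : F →ₗᵢ[ℝ] Y) {ε : ℝ} (hε : 0 < ε) :
    ∃ S : F →ₗ[ℝ] X, (∀ f, g f ∈ LinearMap.range j.toLinearMap → j (S f) = g f) ∧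
      ∀ f, (1 + ε)⁻¹ * ‖f‖ ≤ ‖S f‖ ∧ ‖S f‖ ≤ (1 + ε) * ‖f‖ := by
  obtain ⟨T, hT_fix, hT_norm⟩ := hj ε hε (LinearMap.range g.toLinearMap) inferInstance
  refine ⟨j.equivRange.symm.toLinearMap ∘ₗ T ∘ₗ g.equivRange.toLinearMap, fun f hf => ?_, fun f => ?_⟩
  · have hz (z : LinearMap.range j.toLinearMap) : j (j.equivRange.symm z) = z := by
      rw [← LinearIsometry.equivRange_apply_coe, LinearIsometryEquiv.apply_symm_apply]
    simpa [hz] using hT_fix (g.equivRange f) hf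
  · simpa using hT_norm (g.equivRange f)

theorem gurarii_of_superIdeal_in_every_superspace
    (X : Type u) [NormedAddCommGroup X] [NormedSpace ℝ X] [CompleteSpace X]
    (h : ∀ (Y : Type u) [NormedAddCommGroup Y] [NormedSpace ℝ Y] [CompleteSpace Y],
      ∀ i : X →ₗᵢ[ℝ] Y, IsSuperIdeal (LinearMap.range i.toLinearMap)) :
    IsGurarii X := by
  intro ε hε F _ _ _ E TE
  obtain ⟨S, hS_fix, hS_norm⟩ :=
    (h _ TE.pushoutInl).exists_lift TE.pushoutInr hε
  refine ⟨S, fun e => TE.pushoutInl.injective ?_, hS_norm⟩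
  rw [hS_fix _ ⟨TE e, (TE.pushoutInr_apply_coe e).symm⟩, TE.pushoutInr_apply_coe]
end
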